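/- arXiv:1901.02588 — 3 statements merged into one kernel-verified Lean document; each statement's English description precedes it below -/
import Mathlib

section
/- Let n ≥ 1, let Ω ⊆ ℝⁿ be a Lebesgue measurable set of finite measure, let δ ∈ (0,1), let v, w : Ω → ℝ be bounded measurable functions, and let g : Ω → ℝ be Lebesgue integrable on Ω. For each integer k ≥ 1 define v_k : Ω → ℝ by v_k(x) = v(x) if the fractional part of k·x₁ lies in [0,δ), and v_k(x) = w(x) otherwise, where x₁ denotes the first coordinate of x. Then lim_{k→∞} ∫_Ω v_k(x) g(x) dx = ∫_Ω ( δ·v(x) + (1−δ)·w(x) ) g(x) dx. -/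
open MeasureTheory Filter Topology Set Function

/-!
Write the pattern as `δ v + (1 - δ) w + (χ (k x₁) - δ) (v - w)`, where `χ` is the 1-periodic
square wave equal to `1` on `[0, δ)`, so that `ρ = χ - δ` has mean zero over a period. For such
a bounded mean-zero `ρ` and `φ ∈ L¹`, the phase-shifted integrals `F s = ∫ ρ (k x₁ + s) φ x dx`
average to zero over `s ∈ [0, 1]` by Fubini, and a phase shift by `s` is a translation of `φ` by
`s / k` along `x₁`. Hence `|F 0| ≤ ‖ρ‖∞ · sup_{|h| ≤ 1/k} ‖φ (· - h e₁) - φ‖₁`, which tends to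
zero by the continuity of translation in `L¹`.
-/

section Translation

variable {G F : Type*} [NormedAddCommGroup G] [MeasurableSpace G] [BorelSpace G]
  [NormedAddCommGroup F] {μ : Measure G} [IsLocallyFiniteMeasure μ] [μ.InnerRegularCompactLTTop]
  [μ.IsAddRightInvariant]

theorem tendsto_integral_norm_comp_add_sub {f : G → F} (hf : Integrable f μ) :
    Tendsto (fun y => ∫ x, ‖f (x + y) - f x‖ ∂μ) (𝓝 0) (𝓝 0) := by
  let τ : G → C(G, G) := fun y => ⟨(· + y), continuous_id.add continuous_const⟩
  have hτ : ∀ y, MeasurePreserving (τ y) μ μ := fun y => measurePreserving_add_right μ y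
  have hτc : Continuous τ :=
    ContinuousMap.continuous_of_continuous_uncurry _ (continuous_snd.add continuous_fst)
  have hlim := (tendsto_const_nhds (x := hf.toL1 f)).compMeasurePreservingLp
    (hτc.tendsto 0) hτ (hτ 0) ENNReal.one_ne_top
  have hτ0 : Lp.compMeasurePreserving (τ 0) (hτ 0) (hf.toL1 f) = hf.toL1 f := by
    ext1
    filter_upwards [Lp.coeFn_compMeasurePreserving (hf.toL1 f) (hτ 0)] with x hx
    rw [hx]
    simp [τ]
  rw [hτ0, ← tendsto_sub_nhds_zero_iff] at hlim
  refine (tendsto_norm_zero.comp hlim).congr fun y => ?_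
  rw [comp_apply, L1.norm_eq_integral_norm]
  refine integral_congr_ae ?_
  filter_upwards [Lp.coeFn_sub (Lp.compMeasurePreserving (τ y) (hτ y) (hf.toL1 f)) (hf.toL1 f),
    Lp.coeFn_compMeasurePreserving (hf.toL1 f) (hτ y),
    (hτ y).quasiMeasurePreserving.ae_eq_comp hf.coeFn_toL1, hf.coeFn_toL1]
    with x hsub hcomp htrans hself
  rw [hsub, Pi.sub_apply, hcomp, htrans, hself]
  rfl

end Translation

theorem norm_integral_mul_sub_mul_le {α : Type*} [MeasurableSpace α] {μ : Measure α}
    {a f g : α → ℝ} {C : ℝ} (ha : AEStronglyMeasurable a μ) (haC : ∀ x, ‖a x‖ ≤ C)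
    (hf : Integrable f μ) (hg : Integrable g μ) :
    ‖∫ x, a x * f x ∂μ - ∫ x, a x * g x ∂μ‖ ≤ C * ∫ x, ‖f x - g x‖ ∂μ := by
  rw [← integral_sub (hf.bdd_mul ha (.of_forall haC)) (hg.bdd_mul ha (.of_forall haC)),
    ← integral_const_mul]
  refine norm_integral_le_of_norm_le ((hf.sub hg).norm.const_mul C) (.of_forall fun x => ?_)
  rw [← mul_sub, norm_mul]
  exact mul_le_mul_of_nonneg_right (haC x) (norm_nonneg _)

noncomputable def squareWave (δ t : ℝ) : ℝ := if Int.fract t < δ then 1 else 0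

section SquareWave

variable {δ : ℝ}

theorem measurable_squareWave : Measurable (squareWave δ) :=
  Measurable.ite (measurableSet_lt measurable_fract measurable_const) measurable_const
    measurable_const

theorem periodic_squareWave : Periodic (squareWave δ) 1 := fun t => by
  simp [squareWave]

theorem abs_squareWave_sub_le (hδ0 : 0 ≤ δ) (hδ1 : δ ≤ 1) (t : ℝ) : |squareWave δ t - δ| ≤ 1 := by
  unfold squareWave
  split_ifs <;> rw [abs_le] <;> constructor <;> linarith

theorem intervalIntegral_squareWave_sub_eq_zero (hδ0 : 0 ≤ δ) (hδ1 : δ ≤ 1) :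
    ∫ t in (0 : ℝ)..1, (squareWave δ t - δ) = 0 := by
  have hIoo : EqOn (fun t => squareWave δ t - δ) (fun t => (Iio δ).indicator 1 t - δ) (Ioo 0 1) :=
    fun t ht => by simp [squareWave, Int.fract_eq_self.mpr ⟨ht.1.le, ht.2⟩, indicator_apply]
  have hδvol : volume (Iio δ ∩ Ioo (0 : ℝ) 1) = ENNReal.ofReal δ := by
    rw [Iio_inter_Ioo, min_eq_left hδ1, Real.volume_Ioo, sub_zero]
  rw [intervalIntegral.integral_of_le zero_le_one, integral_Ioc_eq_integral_Ioo,
    setIntegral_congr_fun measurableSet_Ioo hIoo,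
    integral_sub (f := (Iio δ).indicator 1) ((integrable_indicator_iff measurableSet_Iio).2
      (integrableOn_const (C := (1 : ℝ)) ?_)) (integrable_const δ),
    integral_indicator_one measurableSet_Iio]
  · simp [Measure.real, Measure.restrict_apply measurableSet_Iio, hδvol, hδ0]
  · rw [Measure.restrict_apply measurableSet_Iio, hδvol]
    exact ENNReal.ofReal_ne_top

theorem ite_fract_lt_eq (t a b : ℝ) :
    (if Int.fract t < δ then a else b) = δ * a + (1 - δ) * b + (squareWave δ t - δ) * (a - b) := by
  unfold squareWave
  split_ifs <;> ring

end SquareWave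

section Oscillation

variable {E : Type*} [NormedAddCommGroup E] [NormedSpace ℝ E] [MeasurableSpace E] [BorelSpace E]
  {μ : Measure E} {ρ : ℝ → ℝ} {C : ℝ} {φ : E → ℝ} {L : E →L[ℝ] ℝ} {e : E}

theorem integrable_uncurry_comp_add_mul [SFinite μ] (hρ : Measurable ρ) (hρC : ∀ t, ‖ρ t‖ ≤ C)
    (hφ : Integrable φ μ) (k : ℝ) (ν : Measure ℝ) [IsFiniteMeasure ν] :
    Integrable (uncurry fun s x => ρ (k * L x + s) * φ x) (ν.prod μ) :=
  (hφ.comp_snd ν).bdd_mul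
    (hρ.comp ((measurable_const.mul (L.measurable.comp measurable_snd)).add measurable_fst)
      ).aestronglyMeasurable
    (.of_forall fun _ => hρC _)

theorem Function.Periodic.intervalIntegral_integral_comp_add_mul_eq_zero [SFinite μ]
    (hρ1 : Periodic ρ 1) (hρ : Measurable ρ) (hρC : ∀ t, ‖ρ t‖ ≤ C) (hρ0 : ∫ t in (0 : ℝ)..1, ρ t = 0)
    (hφ : Integrable φ μ) (k : ℝ) :
    ∫ s in (0 : ℝ)..1, ∫ x, ρ (k * L x + s) * φ x ∂μ = 0 := by
  have : IsFiniteMeasure (volume.restrict (uIoc (0 : ℝ) 1)) := by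
    rw [uIoc_of_le zero_le_one]; infer_instance
  rw [intervalIntegral_integral_swap (integrable_uncurry_comp_add_mul hρ hρC hφ k _)]
  refine integral_eq_zero_of_ae (.of_forall fun x => ?_)
  have hmean : ∫ s in (0 : ℝ)..1, ρ (k * L x + s) = 0 := by
    rw [intervalIntegral.integral_comp_add_left, add_zero, hρ1.intervalIntegral_add_eq _ 0,
      zero_add, hρ0]
  simp [intervalIntegral.integral_mul_const, hmean]

theorem integral_comp_add_mul_eq_integral_mul_comp_sub [μ.IsAddRightInvariant] (he : L e = 1)
    {k : ℝ} (hk : k ≠ 0) (s : ℝ) :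
    ∫ x, ρ (k * L x + s) * φ x ∂μ = ∫ x, ρ (k * L x) * φ (x - (s / k) • e) ∂μ := by
  rw [← integral_sub_right_eq_self _ ((s / k) • e)]
  congr 1 with x
  rw [map_sub, map_smul, he, smul_eq_mul, mul_one, mul_sub, mul_div_cancel₀ _ hk, sub_add_cancel]

theorem Function.Periodic.norm_integral_comp_mul_mul_le [SFinite μ] [μ.IsAddRightInvariant]
    (hρ1 : Periodic ρ 1) (hρ : Measurable ρ) (hρC : ∀ t, ‖ρ t‖ ≤ C) (hρ0 : ∫ t in (0 : ℝ)..1, ρ t = 0)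
    (he : L e = 1) (hφ : Integrable φ μ) {k ε : ℝ} (hk : 0 < k)
    (hε : ∀ s ∈ Ioc (0 : ℝ) 1, ∫ x, ‖φ (x - (s / k) • e) - φ x‖ ∂μ ≤ ε) :
    ‖∫ x, ρ (k * L x) * φ x ∂μ‖ ≤ C * ε := by
  set F : ℝ → ℝ := fun s => ∫ x, ρ (k * L x + s) * φ x ∂μ
  have hF : IntervalIntegrable F volume 0 1 :=
    (intervalIntegrable_iff_integrableOn_Ioc_of_le zero_le_one).2
      (integrable_uncurry_comp_add_mul hρ hρC hφ k _).integral_prod_left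
  -- `F` has mean zero over a period, so `F 0` is the mean of `F 0 - F s`.
  have hF0 : ∫ x, ρ (k * L x) * φ x ∂μ = ∫ s in (0 : ℝ)..1, (F 0 - F s) := by
    rw [intervalIntegral.integral_sub intervalIntegrable_const hF,
      hρ1.intervalIntegral_integral_comp_add_mul_eq_zero hρ hρC hρ0 hφ k]
    simp [F]
  have hρL : AEStronglyMeasurable (fun x => ρ (k * L x)) μ :=
    (hρ.comp (measurable_const.mul L.measurable)).aestronglyMeasurable
  have hbound : ∀ s ∈ uIoc (0 : ℝ) 1, ‖F 0 - F s‖ ≤ C * ε := by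
    intro s hs
    rw [uIoc_of_le zero_le_one] at hs
    calc ‖F 0 - F s‖
        = ‖∫ x, ρ (k * L x) * φ (x - (s / k) • e) ∂μ - ∫ x, ρ (k * L x) * φ x ∂μ‖ := by
          rw [norm_sub_rev]
          simp only [F, add_zero, integral_comp_add_mul_eq_integral_mul_comp_sub he hk.ne' s]
      _ ≤ C * ∫ x, ‖φ (x - (s / k) • e) - φ x‖ ∂μ :=
          norm_integral_mul_sub_mul_le hρL (fun _ => hρC _) (hφ.comp_sub_right _) hφ
      _ ≤ C * ε := mul_le_mul_of_nonneg_left (hε s hs) ((norm_nonneg _).trans (hρC 0))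
  simpa [hF0] using intervalIntegral.norm_integral_le_of_norm_le_const hbound

theorem Function.Periodic.tendsto_integral_comp_mul_mul [SFinite μ] [IsLocallyFiniteMeasure μ]
    [μ.InnerRegularCompactLTTop] [μ.IsAddRightInvariant] (hρ1 : Periodic ρ 1) (hρ : Measurable ρ)
    (hρC : ∀ t, ‖ρ t‖ ≤ C) (hρ0 : ∫ t in (0 : ℝ)..1, ρ t = 0)
    (he : L e = 1) (hφ : Integrable φ μ) :
    Tendsto (fun k : ℝ => ∫ x, ρ (k * L x) * φ x ∂μ) atTop (𝓝 0) := by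
  have hC : 0 ≤ C := (norm_nonneg _).trans (hρC 0)
  have hshift : Tendsto (fun h : ℝ => ∫ x, ‖φ (x - h • e) - φ x‖ ∂μ) (𝓝 0) (𝓝 0) := by
    have hneg : Tendsto (fun h : ℝ => -(h • e)) (𝓝 0) (𝓝 0) := by
      have hc : Continuous fun h : ℝ => -(h • e) := by fun_prop
      simpa using hc.tendsto 0
    simpa only [comp_def, ← sub_eq_add_neg] using (tendsto_integral_norm_comp_add_sub hφ).comp hneg
  rw [Metric.tendsto_nhds]
  intro ε hε
  obtain ⟨η, hη, hsmall⟩ := Metric.eventually_nhds_iff_ball.mp <|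
    hshift.eventually (gt_mem_nhds (show 0 < ε / (C + 1) by positivity))
  filter_upwards [eventually_gt_atTop η⁻¹] with k hk
  have hk0 : 0 < k := (inv_pos.mpr hη).trans hk
  have hbound : ∀ s ∈ Ioc (0 : ℝ) 1, ∫ x, ‖φ (x - (s / k) • e) - φ x‖ ∂μ ≤ ε / (C + 1) := by
    intro s hs
    refine (hsmall _ ?_).le
    rw [Metric.mem_ball, dist_zero_right, Real.norm_of_nonneg (div_nonneg hs.1.le hk0.le),
      div_lt_iff₀ hk0]
    nlinarith [hs.2, (inv_lt_iff_one_lt_mul₀' hη).mp hk]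
  calc dist (∫ x, ρ (k * L x) * φ x ∂μ) 0
      ≤ C * (ε / (C + 1)) := by
        rw [dist_zero_right]
        exact hρ1.norm_integral_comp_mul_mul_le hρ hρC hρ0 he hφ hk0 hbound
    _ < ε := by
        rw [mul_div_assoc', div_lt_iff₀ (by positivity)]
        nlinarith

theorem tendsto_integral_ite_fract_lt_mul [SFinite μ] [IsLocallyFiniteMeasure μ]
    [μ.InnerRegularCompactLTTop] [μ.IsAddRightInvariant] {δ Cv Cw : ℝ} {v w g : E → ℝ}
    (hδ0 : 0 ≤ δ) (hδ1 : δ ≤ 1) (hv : Measurable v) (hw : Measurable w)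
    (hvb : ∀ x, |v x| ≤ Cv) (hwb : ∀ x, |w x| ≤ Cw) (he : L e = 1) (hg : Integrable g μ) :
    Tendsto (fun k : ℝ => ∫ x, (if Int.fract (k * L x) < δ then v x else w x) * g x ∂μ) atTop
      (𝓝 (∫ x, (δ * v x + (1 - δ) * w x) * g x ∂μ)) := by
  have hvg := hg.bdd_mul hv.aestronglyMeasurable (.of_forall hvb)
  have hwg := hg.bdd_mul hw.aestronglyMeasurable (.of_forall hwb)
  have hmix : Integrable (fun x => (δ * v x + (1 - δ) * w x) * g x) μ :=
    ((hvg.const_mul δ).add (hwg.const_mul (1 - δ))).congr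
      (.of_forall fun x => by simp only [Pi.add_apply]; ring)
  have hdiff : Integrable (fun x => (v x - w x) * g x) μ :=
    (hvg.sub hwg).congr (.of_forall fun x => by simp only [Pi.sub_apply]; ring)
  have hρ : Measurable fun t => squareWave δ t - δ := measurable_squareWave.sub measurable_const
  have hρC := abs_squareWave_sub_le hδ0 hδ1
  have hρ1 : Periodic (fun t => squareWave δ t - δ) 1 := fun t => by
    simp only [periodic_squareWave t]
  have hoscInt : ∀ k : ℝ,
      Integrable (fun x => (squareWave δ (k * L x) - δ) * ((v x - w x) * g x)) μ := fun k =>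
    hdiff.bdd_mul (hρ.comp (measurable_const.mul L.measurable)).aestronglyMeasurable
      (.of_forall fun _ => hρC _)
  have hsplit : ∀ k : ℝ, ∫ x, (if Int.fract (k * L x) < δ then v x else w x) * g x ∂μ
      = (∫ x, (δ * v x + (1 - δ) * w x) * g x ∂μ)
        + ∫ x, (squareWave δ (k * L x) - δ) * ((v x - w x) * g x) ∂μ := by
    intro k
    rw [← integral_add hmix (hoscInt k)]
    congr 1 with x
    rw [ite_fract_lt_eq]
    ring
  simpa only [hsplit, add_zero] using (hρ1.tendsto_integral_comp_mul_mul hρ hρC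
    (intervalIntegral_squareWave_sub_eq_zero hδ0 hδ1) he hdiff).const_add _

end Oscillation

theorem stmt_2_general (n : ℕ) (hn : 1 ≤ n) (Ω : Set (EuclideanSpace ℝ (Fin n)))
    (hΩ : MeasurableSet Ω)
    (δ : ℝ) (hδ : δ ∈ Set.Ioo (0 : ℝ) 1)
    (v w : EuclideanSpace ℝ (Fin n) → ℝ)
    (hv : Measurable v) (hw : Measurable w)
    (Cv : ℝ) (hvb : ∀ x, |v x| ≤ Cv) (Cw : ℝ) (hwb : ∀ x, |w x| ≤ Cw)
    (g : EuclideanSpace ℝ (Fin n) → ℝ) (hg : IntegrableOn g Ω) :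
    Filter.Tendsto
      (fun k : ℕ => ∫ x in Ω,
        (if Int.fract ((k : ℝ) * x ⟨0, hn⟩) < δ then v x else w x) * g x)
      Filter.atTop
      (nhds (∫ x in Ω, (δ * v x + (1 - δ) * w x) * g x)) := by
  have hlim := tendsto_integral_ite_fract_lt_mul (μ := volume)
    (L := EuclideanSpace.proj ⟨0, hn⟩) (e := EuclideanSpace.single ⟨0, hn⟩ 1)
    hδ.1.le hδ.2.le hv hw hvb hwb (by simp) ((integrable_indicator_iff hΩ).2 hg)
  simp only [← integral_indicator hΩ, indicator_mul_right]
  exact hlim.comp tendsto_natCast_atTop_atTop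

/-- Riemann–Lebesgue-type weak convergence of rapidly oscillating mixtures of
two controls: the patterned controls `v_k` converge weakly (against any
integrable `g`) to the convex combination `δ·v + (1-δ)·w`. -/
theorem stmt_2 (n : ℕ) (hn : 1 ≤ n) (Ω : Set (EuclideanSpace ℝ (Fin n)))
    (hΩ : MeasurableSet Ω) (hΩfin : volume Ω < ⊤)
    (δ : ℝ) (hδ : δ ∈ Set.Ioo (0 : ℝ) 1)
    (v w : EuclideanSpace ℝ (Fin n) → ℝ)
    (hv : Measurable v) (hw : Measurable w)
    (Cv : ℝ) (hvb : ∀ x, |v x| ≤ Cv) (Cw : ℝ) (hwb : ∀ x, |w x| ≤ Cw)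
    (g : EuclideanSpace ℝ (Fin n) → ℝ) (hg : IntegrableOn g Ω) :
    Filter.Tendsto
      (fun k : ℕ => ∫ x in Ω,
        (if Int.fract ((k : ℝ) * x ⟨0, hn⟩) < δ then v x else w x) * g x)
      Filter.atTop
      (nhds (∫ x in Ω, (δ * v x + (1 - δ) * w x) * g x)) :=
  stmt_2_general n hn Ω hΩ δ hδ v w hv hw Cv hvb Cw hwb g hg
end

section
/- Let m ≥ 1 and 0 < τ < 1 be real numbers, and let ψ, A, B ∈ ℝ satisfy |A − B| < 1/2. Define v* := ( (1/2)ψ + m·A + τ·B ) / (m+τ) and v̄ := min( B+1, max( B−1, v* ) ). Then m·|v̄ − A| ≤ 2·|ψ| + τ. -/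
/-! Since `|A - B| < 1/2`, the point `A` lies in `[B - 1, B + 1]`, so projecting `v*` onto that
interval only brings it closer to `A`. For `v*` itself the optimality condition gives
`(m + τ)(v* - A) = ψ/2 + τ(B - A)`, whence `m|v* - A| ≤ |ψ|/2 + τ/2`. -/

theorem abs_min_max_sub_le {α : Type*} [AddCommGroup α] [LinearOrder α] [IsOrderedAddMonoid α]
    {lo hi a : α} (hlo : lo ≤ a) (hhi : a ≤ hi) (v : α) :
    |min hi (max lo v) - a| ≤ |v - a| :=
  calc |min hi (max lo v) - a| = |min hi (max v lo) - min hi (max a lo)| := by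
        rw [max_eq_left hlo, min_eq_right hhi, max_comm]
    _ ≤ max |hi - hi| |max v lo - max a lo| := abs_min_sub_min_le_max _ _ _ _
    _ = |max v lo - max a lo| := by simp
    _ ≤ |v - a| := abs_max_sub_max_le_abs _ _ _

theorem mul_abs_weighted_mean_sub_le {m τ : ℝ} (hτ : 0 ≤ τ) (hmτ : 0 < m + τ)
    (c a b : ℝ) :
    m * |(c + m * a + τ * b) / (m + τ) - a| ≤ |c| + τ * |b - a| := by
  have hsub : (c + m * a + τ * b) / (m + τ) - a = (c + τ * (b - a)) / (m + τ) := by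
    field_simp
    ring
  calc m * |(c + m * a + τ * b) / (m + τ) - a|
      ≤ (m + τ) * |(c + τ * (b - a)) / (m + τ)| := by
        rw [hsub]
        gcongr
        exact le_add_of_nonneg_right hτ
    _ = |c + τ * (b - a)| := by rw [abs_div, abs_of_pos hmτ, mul_div_cancel₀ _ hmτ.ne']
    _ ≤ |c| + τ * |b - a| :=
        (abs_add_le _ _).trans_eq (by rw [abs_mul, abs_of_nonneg hτ])

theorem stmt_4_general (m τ ψ A B : ℝ) (hm : 1 ≤ m) (hτ0 : 0 < τ)
    (hAB : |A - B| < 1 / 2) :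
    m * |min (B + 1) (max (B - 1) (((1 / 2) * ψ + m * A + τ * B) / (m + τ))) - A| ≤
      2 * |ψ| + τ := by
  obtain ⟨hlo, hhi⟩ := abs_lt.mp hAB
  have hBA : |B - A| ≤ 1 / 2 := by rw [abs_sub_comm]; exact hAB.le
  calc m * |min (B + 1) (max (B - 1) (((1 / 2) * ψ + m * A + τ * B) / (m + τ))) - A|
      ≤ m * |((1 / 2) * ψ + m * A + τ * B) / (m + τ) - A| :=
        mul_le_mul_of_nonneg_left (abs_min_max_sub_le (by linarith) (by linarith) _) (by linarith)
    _ ≤ |(1 / 2) * ψ| + τ * |B - A| :=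
        mul_abs_weighted_mean_sub_le hτ0.le (by linarith) _ _ _
    _ ≤ 2 * |ψ| + τ := by
        have hτBA : τ * |B - A| ≤ τ * (1 / 2) := mul_le_mul_of_nonneg_left hBA hτ0.le
        rw [abs_mul, abs_of_pos (by norm_num : (0 : ℝ) < 1 / 2)]
        linarith [abs_nonneg ψ]

/-- Pointwise estimate (5.15): if `|A - B| < 1/2`, `m ≥ 1`, `0 < τ < 1`, and
`v̄` is the projection onto `[B-1, B+1]` of the unconstrained maximizer
`v* = ((1/2)ψ + mA + τB)/(m+τ)`, then `m|v̄ - A| ≤ 2|ψ| + τ`. -/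
theorem stmt_4 (m τ ψ A B : ℝ) (hm : 1 ≤ m) (hτ0 : 0 < τ) (hτ1 : τ < 1)
    (hAB : |A - B| < 1 / 2) :
    m * |min (B + 1) (max (B - 1) (((1 / 2) * ψ + m * A + τ * B) / (m + τ))) - A| ≤
      2 * |ψ| + τ :=
  stmt_4_general m τ ψ A B hm hτ0 hAB
end

section
/- Let (Ω, 𝔉, μ) be a finite measure space, let a < b be real numbers, let C > 0, and let h : Ω × ℝ → ℝ be measurable such that for every x ∈ Ω the function u ↦ h(x,u) is continuous on [a,b] and |h(x,u)| ≤ C for all x ∈ Ω and u ∈ [a,b]. Let ū : Ω → [a,b] be measurable and suppose that ∫_Ω h(x, ū(x)) dμ(x) ≥ ∫_Ω h(x, u(x)) dμ(x) for every measurable function u : Ω → [a,b]. Then for μ-almost every x ∈ Ω, h(x, ū(x)) = max_{u ∈ [a,b]} h(x, u). -/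
open MeasureTheory

/-!
Switching the optimal control `ū` to a constant `q ∈ [a,b]` on an arbitrary measurable set `s`
is an admissible control, so optimality gives `∫_s h(x,q) ≤ ∫_s h(x,ū(x))` for every `s`, that is
`h(x,q) ≤ h(x,ū(x))` for a.e. `x`. Taking `q` in a countable dense subset of `[a,b]` keeps the
exceptional set null, and continuity of `h(x,·)` extends the inequality to all of `[a,b]`.
-/

section

variable {Ω α : Type*} [MeasurableSpace Ω] {μ : Measure Ω}

theorem integrable_comp_of_forall_abs_le [MeasurableSpace α] [IsFiniteMeasure μ]
    {h : Ω → α → ℝ} (hmeas : Measurable (Function.uncurry h)) {S : Set α} {C : ℝ}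
    (hbound : ∀ x, ∀ y ∈ S, |h x y| ≤ C) {u : Ω → α} (hu : Measurable u)
    (hmem : ∀ x, u x ∈ S) : Integrable (fun x => h x (u x)) μ :=
  (integrable_const C).mono' (hmeas.comp (measurable_id.prodMk hu)).aestronglyMeasurable
    (ae_of_all μ fun x => hbound x (u x) (hmem x))

theorem ae_le_of_forall_integral_piecewise_le {f g : Ω → ℝ} (hf : Integrable f μ)
    (hg : Integrable g μ) [∀ s : Set Ω, DecidablePred (· ∈ s)]
    (hswitch : ∀ s, MeasurableSet s → ∫ x, s.piecewise f g x ∂μ ≤ ∫ x, g x ∂μ) :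
    f ≤ᵐ[μ] g := by
  refine ae_le_of_forall_setIntegral_le hf hg fun s hs _ => ?_
  have hle := hswitch s hs
  rw [integral_piecewise hs hf.integrableOn hg.integrableOn,
    ← integral_add_compl hs hg] at hle
  linarith

theorem ae_forall_le_of_forall_ae_le [TopologicalSpace α]
    [TopologicalSpace.PseudoMetrizableSpace α] {s : Set α} (hs : TopologicalSpace.IsSeparable s)
    {h : Ω → α → ℝ} (hcont : ∀ x, ContinuousOn (h x) s) {g : Ω → ℝ}
    (hle : ∀ y ∈ s, ∀ᵐ x ∂μ, h x y ≤ g x) : ∀ᵐ x ∂μ, ∀ y ∈ s, h x y ≤ g x := by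
  obtain ⟨t, hts, htc, hst⟩ := hs.exists_countable_dense_subset
  filter_upwards [(ae_ball_iff htc).2 fun y hy => hle y (hts hy)] with x hx y hy
  exact ((hcont x y hy).mono hts).closure_le (hst hy) continuousWithinAt_const hx

end

theorem stmt_5_general {Ω : Type*} [MeasurableSpace Ω] (μ : Measure Ω) [IsFiniteMeasure μ]
    (a b : ℝ) (C : ℝ)
    (h : Ω → ℝ → ℝ) (hmeas : Measurable (Function.uncurry h))
    (hcont : ∀ x, ContinuousOn (h x) (Set.Icc a b))
    (hbound : ∀ x, ∀ u ∈ Set.Icc a b, |h x u| ≤ C)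
    (ubar : Ω → ℝ) (hubar_meas : Measurable ubar)
    (hubar_mem : ∀ x, ubar x ∈ Set.Icc a b)
    (hopt : ∀ u : Ω → ℝ, Measurable u → (∀ x, u x ∈ Set.Icc a b) →
      ∫ x, h x (u x) ∂μ ≤ ∫ x, h x (ubar x) ∂μ) :
    ∀ᵐ x ∂μ, IsMaxOn (h x) (Set.Icc a b) (ubar x) := by
  classical
  refine ae_forall_le_of_forall_ae_le (.of_separableSpace _) hcont fun q hq => ?_
  refine ae_le_of_forall_integral_piecewise_le
    (integrable_comp_of_forall_abs_le hmeas hbound measurable_const fun _ => hq)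
    (integrable_comp_of_forall_abs_le hmeas hbound hubar_meas hubar_mem) fun s hs => ?_
  have hswitch_mem : ∀ x, s.piecewise (fun _ => q) ubar x ∈ Set.Icc a b := fun x => by
    by_cases hx : x ∈ s <;> simp [hx, hq, hubar_mem x]
  simpa only [Set.apply_piecewise] using
    hopt _ (measurable_const.piecewise hs hubar_meas) hswitch_mem

/-- Passage from the integrated maximum condition to the pointwise a.e. maximum
condition: if `ū` maximizes `u ↦ ∫ h(x, u(x)) dμ` over measurable `[a,b]`-valued
controls, then for a.e. `x`, `h(x, ū(x)) = max_{u ∈ [a,b]} h(x,u)`. -/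
theorem stmt_5 {Ω : Type*} [MeasurableSpace Ω] (μ : Measure Ω) [IsFiniteMeasure μ]
    (a b : ℝ) (hab : a < b) (C : ℝ) (hC : 0 < C)
    (h : Ω → ℝ → ℝ) (hmeas : Measurable (Function.uncurry h))
    (hcont : ∀ x, ContinuousOn (h x) (Set.Icc a b))
    (hbound : ∀ x, ∀ u ∈ Set.Icc a b, |h x u| ≤ C)
    (ubar : Ω → ℝ) (hubar_meas : Measurable ubar)
    (hubar_mem : ∀ x, ubar x ∈ Set.Icc a b)
    (hopt : ∀ u : Ω → ℝ, Measurable u → (∀ x, u x ∈ Set.Icc a b) →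
      ∫ x, h x (u x) ∂μ ≤ ∫ x, h x (ubar x) ∂μ) :
    ∀ᵐ x ∂μ, IsMaxOn (h x) (Set.Icc a b) (ubar x) :=
  stmt_5_general μ a b C h hmeas hcont hbound ubar hubar_meas hubar_mem hopt
end
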